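/- arXiv:1809.03220 — 2 statements merged into one kernel-verified Lean document; each statement's English description precedes it below -/
import Mathlib

section
/- Let Σ be a nonempty finite alphabet and let L ⊆ Σ^ω be accepted by a deterministic Muller automaton with finite state set. Then L is a finite boolean combination of Π⁰₂ (Gδ) subsets of the Cantor space Σ^ω; more precisely, L is a finite union of sets of the form G \ G' where G and G' are Gδ subsets of Σ^ω. -/
/-- The unique run of a deterministic automaton `(δ, q₀)` on the ω-word `x`. -/
def detRun {K α : Type*} (δ : K → α → K) (q₀ : K) (x : ℕ → α) : ℕ → K :=
  fun n => Nat.rec (motive := fun _ => K) q₀ (fun i q => δ q (x i)) n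

theorem detRun_succ {K α : Type*} (δ : K → α → K) (q₀ : K) (x : ℕ → α) (n : ℕ) :
    detRun δ q₀ x (n + 1) = δ (detRun δ q₀ x n) (x n) := rfl

theorem detRun_congr {K α : Type*} (δ : K → α → K) (q₀ : K) (x y : ℕ → α) (n : ℕ)
    (h : ∀ i < n, x i = y i) : detRun δ q₀ x n = detRun δ q₀ y n := by
  induction n with
  | zero => rfl
  | succ n ih =>
    rw [detRun_succ, detRun_succ, ih (fun i hi => h i (hi.trans (Nat.lt_succ_self n))),
      h n (Nat.lt_succ_self n)]

theorem isOpen_detRun {K α : Type*} [TopologicalSpace α] [DiscreteTopology α]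
    (δ : K → α → K) (q₀ : K) (n : ℕ) (q : K) :
    IsOpen {x : ℕ → α | detRun δ q₀ x n = q} := by
  rw [isOpen_iff_mem_nhds]
  intro x hx
  have hmem : (⋂ i ∈ Finset.range n, (fun y : ℕ → α => y i) ⁻¹' {x i}) ∈ nhds x := by
    refine (Filter.biInter_finset_mem _).2 fun i _ => ?_
    exact (continuous_apply i).continuousAt.preimage_mem_nhds (by simp)
  refine Filter.mem_of_superset hmem ?_
  intro y hy
  simp only [Set.mem_iInter, Set.mem_preimage, Set.mem_singleton_iff, Finset.mem_range] at hy
  have : detRun δ q₀ y n = detRun δ q₀ x n := detRun_congr δ q₀ y x n hy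
  simpa [Set.mem_setOf_eq, this] using hx

theorem isGδ_infVisit {K α : Type*} [TopologicalSpace α] [DiscreteTopology α]
    (δ : K → α → K) (q₀ : K) (q : K) :
    IsGδ {x : ℕ → α | {n : ℕ | detRun δ q₀ x n = q}.Infinite} := by
  have heq : {x : ℕ → α | {n : ℕ | detRun δ q₀ x n = q}.Infinite}
      = ⋂ N : ℕ, ⋃ n : ℕ, ⋃ _ : N ≤ n, {x : ℕ → α | detRun δ q₀ x n = q} := by
    ext x
    simp only [Set.mem_setOf_eq, Set.mem_iInter, Set.mem_iUnion]
    rw [Set.infinite_iff_frequently_cofinite, Nat.cofinite_eq_atTop, Filter.frequently_atTop]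
    simp [ge_iff_le]
  rw [heq]
  exact .iInter fun N =>
    (isOpen_iUnion fun n => isOpen_iUnion fun _ => isOpen_detRun δ q₀ n q).isGδ

/-- If `L ⊆ α^ω` is accepted by a deterministic Muller automaton with
finite state set, then `L` is a finite boolean combination of `Π⁰₂` (Gδ) subsets of the
Cantor space `α^ω`; more precisely, `L` is a finite union of sets of the form `G \ G'`
with `G`, `G'` Gδ. -/
theorem muller_language_is_finite_union_of_Gdelta_differences
    {α : Type*} [Fintype α] [Nonempty α] [TopologicalSpace α] [DiscreteTopology α]
    {K : Type*} [Fintype K] (δ : K → α → K) (q₀ : K) (𝓕 : Set (Set K))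
    (L : Set (ℕ → α))
    (hL : L = {x : ℕ → α | {q : K | {n : ℕ | detRun δ q₀ x n = q}.Infinite} ∈ 𝓕}) :
    ∃ (m : ℕ) (G G' : Fin m → Set (ℕ → α)),
      (∀ i, IsGδ (G i) ∧ IsGδ (G' i)) ∧ L = ⋃ i, (G i \ G' i) := by
  classical
  set Inf : K → Set (ℕ → α) := fun q => {x | {n : ℕ | detRun δ q₀ x n = q}.Infinite} with hInf
  let e : Set K ≃ Fin (Fintype.card (Set K)) := Fintype.equivFin (Set K)
  refine ⟨Fintype.card (Set K),
    fun i => if e.symm i ∈ 𝓕 then ⋂ q ∈ e.symm i, Inf q else ∅,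
    fun i => if e.symm i ∈ 𝓕 then ⋃ q ∈ (e.symm i)ᶜ, Inf q else ∅, ?_, ?_⟩
  · intro i
    constructor
    · dsimp only
      split
      · exact .biInter (Set.to_countable _) fun q _ => isGδ_infVisit δ q₀ q
      · exact .empty
    · dsimp only
      split
      · exact .biUnion (Set.toFinite _) fun q _ => isGδ_infVisit δ q₀ q
      · exact .empty
  · subst hL
    ext x
    simp only [Set.mem_iUnion, Set.mem_setOf_eq]
    constructor
    · intro hx
      have hx' : {q : K | x ∈ Inf q} ∈ 𝓕 := hx
      refine ⟨e {q | x ∈ Inf q}, ?_, ?_⟩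
      · simp only [Equiv.symm_apply_apply, if_pos hx', Set.mem_iInter]
        exact fun q hq => hq
      · simp only [Equiv.symm_apply_apply, if_pos hx']
        intro h
        obtain ⟨q, hq, hq'⟩ := Set.mem_iUnion₂.1 h
        exact hq hq'
    · rintro ⟨i, hx⟩
      by_cases hF : e.symm i ∈ 𝓕
      · rw [Set.mem_diff, if_pos hF, if_pos hF] at hx
        obtain ⟨h1, h2⟩ := hx
        simp only [Set.mem_iInter] at h1
        rw [Set.mem_iUnion₂] at h2
        push_neg at h2
        have key : {q : K | x ∈ Inf q} = e.symm i := by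
          ext q
          exact ⟨fun hq => by_contra fun hq' => h2 q hq' hq, fun hq => h1 q hq⟩
        have key' : ({q : K | {n : ℕ | detRun δ q₀ x n = q}.Infinite} : Set K) = e.symm i := key
        rw [key']
        exact hF
      · rw [Set.mem_diff, if_neg hF, if_neg hF] at hx
        exact absurd hx.1 (Set.notMem_empty x)
end

section
/- Automatic Baire property: Let Σ be a nonempty finite alphabet and let L = L(𝒜) ⊆ Σ^ω be accepted by a nondeterministic Büchi automaton 𝒜 with finite state set. Then there exist nondeterministic Büchi automata ℬ and 𝒞 with finite state sets such that L(ℬ) is an open subset of Σ^ω, L(𝒞) is a countable union of closed sets with empty interior (hence a meager Fσ set), and L(𝒜) Δ L(ℬ) ⊆ L(𝒞). -/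
/-!
Call a word generic if it follows, infinitely often, the strategy of a certain finite machine
reading it. The non-generic words are those in which one fixed diagonal word, containing a move of
the strategy from every machine state, occurs only finitely often: a meager Fσ set recognised by a
Büchi automaton. On generic words, membership in `L` is decided by whether the machine has entered
its main mode, an open and Büchi-recognisable condition.

The machine plays the Banach–Mazur game for `L` on sets of states: `level k` contains the sets
from which the player can force `k` more passes through `F`, the levels stabilise at the winning
sets, and a non-winning set has a rank, the first level it misses. Before the main mode the machine
tracks the threads, the sets of states reachable from the initial state or from a visit to `F`,
and the strategy lowers the rank of every thread; an accepting run of a generic word would then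
produce an infinite descending sequence of ranks. The main mode starts from a winning thread, and
there the strategy forces breakpoints, visits to `F` landing again in a winning set; compactness of
the space of runs turns infinitely many breakpoints into an accepting run.
-/

/-- The ω-language accepted by the nondeterministic Büchi automaton `(K, δ, q₀, F)`. -/
def nbaLang {α K : Type*} (δ : K → α → Set K) (q₀ : K) (F : Set K) : Set (ℕ → α) :=
  {x | ∃ r : ℕ → K, r 0 = q₀ ∧ (∀ n, r (n + 1) ∈ δ (r n) (x n)) ∧
    {n : ℕ | r n ∈ F}.Infinite}

namespace BuchiBaire

open Set Function PiNat

variable {α K Q : Type*}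

section Words

def seg (x : ℕ → α) (t m : ℕ) : List α := (List.range' t (m - t)).map x

@[simp] lemma seg_self (x : ℕ → α) (t : ℕ) : seg x t t = [] := by simp [seg]

@[simp] lemma length_seg (x : ℕ → α) (t m : ℕ) : (seg x t m).length = m - t := by simp [seg]

lemma seg_append (x : ℕ → α) {t m n : ℕ} (htm : t ≤ m) (hmn : m ≤ n) :
    seg x t m ++ seg x m n = seg x t n := by
  have := List.range'_append (s := t) (m := m - t) (n := n - m) (step := 1)
  rw [one_mul, Nat.add_sub_cancel' htm, show m - t + (n - m) = n - t by omega] at this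
  simp [seg, ← List.map_append, this]

lemma seg_succ (x : ℕ → α) {t m : ℕ} (h : t ≤ m) : seg x t (m + 1) = seg x t m ++ [x m] := by
  rw [← seg_append x h m.le_succ]
  simp [seg]

lemma seg_congr {x y : ℕ → α} {t m : ℕ} (h : ∀ i, t ≤ i → i < m → y i = x i) :
    seg y t m = seg x t m :=
  List.map_congr_left fun i hi => by
    rw [List.mem_range'_1] at hi
    exact h i hi.1 (by omega)

lemma getElem_seg (x : ℕ → α) {t m i : ℕ} (h : i < (seg x t m).length) :
    (seg x t m)[i] = x (t + i) := by
  simp [seg]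

def OccursAt (x : ℕ → α) (w : List α) (n : ℕ) : Prop := seg x n (n + w.length) = w

lemma occursAt_append {x : ℕ → α} {u v : List α} {n : ℕ} :
    OccursAt x (u ++ v) n ↔ OccursAt x u n ∧ OccursAt x v (n + u.length) := by
  rw [OccursAt, OccursAt, OccursAt, List.length_append, ← add_assoc,
    ← seg_append x (Nat.le_add_right n u.length) (Nat.le_add_right _ v.length)]
  constructor
  · intro h
    exact List.append_inj h (by simp)
  · rintro ⟨hu, hv⟩
    rw [hu, hv]

lemma OccursAt.seg_eq {x : ℕ → α} {w : List α} {n m : ℕ} (h : OccursAt x w n)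
    (hm : n + w.length ≤ m) : seg x n m = w ++ seg x (n + w.length) m := by
  rw [← seg_append x (Nat.le_add_right n _) hm, h]

lemma exists_occursAt_mem_cylinder (x : ℕ → α) (w : List α) (n : ℕ) :
    ∃ y ∈ cylinder x n, OccursAt y w n := by
  refine ⟨fun i => if h : n ≤ i ∧ i < n + w.length then w[i - n] else x i,
    fun i hi => dif_neg (by omega), List.ext_getElem (by simp) fun i h _ => ?_⟩
  rw [getElem_seg, dif_pos (by simp at h; omega)]
  simp

lemma exists_diagonal_word {β : Type*} (f : β → List α → List α) {s : Set β} (hs : s.Finite) :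
    ∃ w : List α, ∀ b ∈ s, ∃ u v, w = u ++ f b u ++ v := by
  induction s, hs using Set.Finite.induction_on with
  | empty => exact ⟨[], by simp⟩
  | @insert a s _ _ ih =>
    obtain ⟨w, hw⟩ := ih
    refine ⟨w ++ f a w, fun b hb => ?_⟩
    rcases hb with rfl | hb
    · exact ⟨w, [], by simp⟩
    · obtain ⟨u, v, rfl⟩ := hw b hb
      exact ⟨u, v ++ f a (u ++ f b u ++ v), by simp⟩

end Words

section Deterministic

variable (M : DFA α Q)

lemma eval_seg_succ (x : ℕ → α) (n : ℕ) :
    M.eval (seg x 0 (n + 1)) = M.step (M.eval (seg x 0 n)) (x n) := by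
  rw [seg_succ x n.zero_le, DFA.eval_append_singleton]

lemma nbaLang_dfa :
    nbaLang (fun q a => {M.step q a}) M.start M.accept =
      {x | {n | M.eval (seg x 0 n) ∈ M.accept}.Infinite} := by
  ext x
  constructor
  · rintro ⟨r, hr0, hr, hinf⟩
    have hrun : ∀ n, r n = M.eval (seg x 0 n) := by
      intro n
      induction n with
      | zero => simpa using hr0
      | succ n ih =>
        rw [Set.mem_singleton_iff.1 (hr n), ih, eval_seg_succ]
    show Set.Infinite _
    simpa only [hrun] using hinf
  · intro h
    exact ⟨fun n => M.eval (seg x 0 n), rfl, fun n => by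
      simp only [eval_seg_succ, Set.mem_singleton_iff], h⟩

/-- Guess a time after which all states of the run of `M` are accepting, and check it. -/
def coBuchiStep (p : Q × Bool) (a : α) : Set (Q × Bool) :=
  {p' | p'.1 = M.step p.1 a ∧ p.2 ≤ p'.2 ∧ (p'.2 = true → p'.1 ∈ M.accept)}

lemma nbaLang_coBuchiStep :
    nbaLang (coBuchiStep M) (M.start, false) {p | p.2 = true} =
      {x | ∃ m, ∀ n ≥ m, M.eval (seg x 0 n) ∈ M.accept} := by
  ext x
  constructor
  · rintro ⟨r, hr0, hr, hinf⟩
    have hfst : ∀ n, (r n).1 = M.eval (seg x 0 n) := by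
      intro n
      induction n with
      | zero => simp [hr0]
      | succ n ih => rw [(hr n).1, ih, eval_seg_succ]
    have hmono : Monotone fun n => (r n).2 := monotone_nat_of_le_succ fun n => (hr n).2.1
    obtain ⟨m, hm⟩ := hinf.nonempty
    refine ⟨m, fun n hn => ?_⟩
    obtain ⟨k, rfl⟩ : ∃ k, n = k + 1 :=
      Nat.exists_eq_succ_of_ne_zero fun h0 => by subst h0; simp_all
    rw [← hfst]
    exact (hr k).2.2 (Bool.le_iff_imp.1 (hmono hn) hm)
  · rintro ⟨m, hm⟩
    refine ⟨fun n => (M.eval (seg x 0 n), decide (m < n)), by simp, fun n => ?_, ?_⟩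
    · refine ⟨by simp [eval_seg_succ], Bool.le_iff_imp.2 (by simp; omega),
        fun h => hm _ (by simp at h; omega)⟩
    · exact (Set.Ioi_infinite m).mono fun n hn => by simpa using hn

end Deterministic

def IsBuchiRecognizable (L : Set (ℕ → α)) : Prop :=
  ∃ (K : Type) (_ : Fintype K) (δ : K → α → Set K) (q₀ : K) (F : Set K), nbaLang δ q₀ F = L

lemma nbaLang_equiv (e : K ≃ Q) (δ : K → α → Set K) (q₀ : K) (F : Set K) :
    nbaLang (fun q a => e '' δ (e.symm q) a) (e q₀) (e '' F) = nbaLang δ q₀ F := by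
  ext x
  constructor
  · rintro ⟨r, hr0, hr, hinf⟩
    refine ⟨e.symm ∘ r, by simp [hr0], fun n => ?_, ?_⟩
    · simpa [Set.mem_image_equiv] using hr n
    · simpa [Set.mem_image_equiv] using hinf
  · rintro ⟨r, hr0, hr, hinf⟩
    exact ⟨e ∘ r, by simp [hr0], fun n => by simpa using hr n, by simpa using hinf⟩

lemma isBuchiRecognizable_nbaLang [Finite K] (δ : K → α → Set K) (q₀ : K) (F : Set K) :
    IsBuchiRecognizable (nbaLang δ q₀ F) :=
  ⟨_, inferInstance, _, _, _, nbaLang_equiv (Finite.equivFin K) δ q₀ F⟩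

section Topology

variable [TopologicalSpace α] [DiscreteTopology α]

lemma isClopen_setOf_eval_seg (M : DFA α Q) (n : ℕ) (P : Set Q) :
    IsClopen {x : ℕ → α | M.eval (seg x 0 n) ∈ P} := by
  have hopen : ∀ P : Set Q, IsOpen {x : ℕ → α | M.eval (seg x 0 n) ∈ P} := fun P =>
    isOpen_iff_forall_mem_open.2 fun x hx =>
      ⟨cylinder x n, fun y hy => by
        rwa [mem_ofPred_eq, seg_congr fun i _ hi => mem_cylinder_iff.1 hy i hi],
        isOpen_cylinder _ x n, self_mem_cylinder x n⟩
  refine ⟨?_, hopen P⟩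
  convert (hopen Pᶜ).isClosed_compl using 1
  ext
  simp

lemma interior_eq_empty_of_forall_cylinder {C : Set (ℕ → α)}
    (h : ∀ x n, ∃ y ∈ cylinder x n, y ∉ C) : interior C = ∅ := by
  refine eq_empty_iff_forall_notMem.2 fun z hz => ?_
  obtain ⟨_, ⟨y, n, rfl⟩, hzy, hsub⟩ :=
    (isTopologicalBasis_cylinders _).exists_subset_of_mem_open hz isOpen_interior
  obtain ⟨w, hw, hwC⟩ := h z n
  rw [mem_cylinder_iff_eq.1 hzy] at hw
  exact hwC (interior_subset (hsub hw))

end Topology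

section Flags

def reset (B : Set K) : Set (K × Bool) := B ×ˢ {false}

def flagged (S : Set (K × Bool)) : Set K := {q | (q, true) ∈ S}

def states (S : Set (K × Bool)) : Set K := Prod.fst '' S

lemma evalFrom_mono (M : NFA α Q) {S S' : Set Q} (h : S ⊆ S') (w : List α) :
    M.evalFrom S w ⊆ M.evalFrom S' w := by
  rw [← union_eq_right.2 h, NFA.evalFrom_union]
  exact subset_union_left

lemma evalFrom_empty (M : NFA α Q) (w : List α) : M.evalFrom ∅ w = ∅ := by
  induction w with
  | nil => rfl
  | cons a w ih => rwa [NFA.evalFrom_cons, NFA.stepSet_empty]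

lemma exists_mem_Ioc_succ_iff {P : ℕ → Prop} {t m : ℕ} (h : t ≤ m) :
    (∃ τ ∈ Ioc t (m + 1), P τ) ↔ (∃ τ ∈ Ioc t m, P τ) ∨ P (m + 1) := by
  constructor
  · rintro ⟨τ, ⟨h1, h2⟩, hτ⟩
    rcases Nat.lt_or_ge m τ with h3 | h3
    · exact Or.inr (by rwa [show τ = m + 1 by omega] at hτ)
    · exact Or.inl ⟨τ, ⟨h1, h3⟩, hτ⟩
  · rintro (⟨τ, ⟨h1, h2⟩, hτ⟩ | hm)
    · exact ⟨τ, ⟨h1, by omega⟩, hτ⟩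
    · exact ⟨m + 1, ⟨by omega, le_rfl⟩, hm⟩

variable (δ : K → α → Set K) (F : Set K)

/-- The flag of a state records whether an accepting state has been passed since the flag was
last cleared. -/
def flagNFA : NFA α (K × Bool) where
  step p a := {p' | p'.1 ∈ δ p.1 a ∧ (p'.2 = true ↔ p.2 = true ∨ p'.1 ∈ F)}
  start := ∅
  accept := ∅

def fsucc (B : Set K) (w : List α) : Set K := flagged ((flagNFA δ F).evalFrom (reset B) w)

def IsSegRun (x : ℕ → α) (t m : ℕ) (p : ℕ → K) : Prop :=
  ∀ i, t ≤ i → i < m → p (i + 1) ∈ δ (p i) (x i)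

variable {δ F}

def glue (m : ℕ) (p p' : ℕ → K) (i : ℕ) : K := if i ≤ m then p i else p' i

lemma glue_of_le {m i : ℕ} (p p' : ℕ → K) (h : i ≤ m) : glue m p p' i = p i := if_pos h

lemma glue_of_ge {m i : ℕ} {p p' : ℕ → K} (hm : p m = p' m) (h : m ≤ i) : glue m p p' i = p' i := by
  rcases h.eq_or_lt with rfl | h
  · rw [glue_of_le p p' le_rfl, hm]
  · exact if_neg (Nat.not_le.2 h)

lemma IsSegRun.glue {x : ℕ → α} {t m n : ℕ} {p p' : ℕ → K} (hp : IsSegRun δ x t m p)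
    (hp' : IsSegRun δ x m n p') (hm : p m = p' m) : IsSegRun δ x t n (glue m p p') := by
  intro i h1 h2
  rcases Nat.lt_or_ge i m with hi | hi
  · rw [glue_of_le p p' hi.le, glue_of_le p p' hi]
    exact hp i h1 hi
  · rw [glue_of_ge hm hi, glue_of_ge hm (hi.trans i.le_succ)]
    exact hp' i hi h2

lemma mem_evalFrom_reset_seg {x : ℕ → α} {t m : ℕ} (h : t ≤ m) {B : Set K} {q : K} {b : Bool} :
    (q, b) ∈ (flagNFA δ F).evalFrom (reset B) (seg x t m) ↔
      ∃ p : ℕ → K, p t ∈ B ∧ p m = q ∧ IsSegRun δ x t m p ∧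
        (b = true ↔ ∃ τ ∈ Ioc t m, p τ ∈ F) := by
  classical
  induction m, h using Nat.le_induction generalizing q b with
  | base =>
    simp only [seg_self, NFA.evalFrom_nil, reset, mem_prod, mem_singleton_iff]
    constructor
    · rintro ⟨hq, rfl⟩
      exact ⟨fun _ => q, hq, rfl, fun i h1 h2 => by omega, by simp⟩
    · rintro ⟨p, hp, rfl, -, hb⟩
      exact ⟨hp, by simpa using hb⟩
  | succ m hm ih =>
    rw [seg_succ x hm, NFA.evalFrom_append, NFA.evalFrom_singleton, NFA.mem_stepSet]
    constructor
    · rintro ⟨⟨q', c⟩, hq', hstep, hflag⟩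
      obtain ⟨p, hpt, rfl, hrun, hc⟩ := ih.1 hq'
      have hupd : ∀ i ≤ m, update p (m + 1) q i = p i := fun i hi => update_of_ne (by omega) _ _
      refine ⟨update p (m + 1) q, by rwa [hupd t hm], update_self .., fun i h1 h2 => ?_, ?_⟩
      · rcases Nat.lt_or_ge i m with hi | hi
        · rw [hupd i hi.le, hupd (i + 1) hi]
          exact hrun i h1 hi
        · rw [show i = m by omega, hupd m le_rfl, update_self]
          exact hstep
      · rw [hflag, exists_mem_Ioc_succ_iff hm, update_self, hc]
        refine or_congr_left (exists_congr fun τ => and_congr_right fun hτ => ?_)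
        rw [hupd τ hτ.2]
    · rintro ⟨p, hpt, rfl, hrun, hb⟩
      refine ⟨(p m, decide (∃ τ ∈ Ioc t m, p τ ∈ F)),
        ih.2 ⟨p, hpt, rfl, fun i h1 h2 => hrun i h1 (by omega), decide_eq_true_iff⟩,
        hrun m hm (by omega), ?_⟩
      rw [hb, exists_mem_Ioc_succ_iff hm, decide_eq_true_iff]

lemma mem_fsucc_seg {x : ℕ → α} {t m : ℕ} (h : t ≤ m) {B : Set K} {q : K} :
    q ∈ fsucc δ F B (seg x t m) ↔
      ∃ p : ℕ → K, p t ∈ B ∧ p m = q ∧ IsSegRun δ x t m p ∧ ∃ τ ∈ Ioc t m, p τ ∈ F := by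
  simp only [fsucc, flagged, mem_ofPred_eq, mem_evalFrom_reset_seg h, true_iff]

lemma fsucc_mono {B B' : Set K} (h : B ⊆ B') (w : List α) : fsucc δ F B w ⊆ fsucc δ F B' w :=
  fun _ hq => evalFrom_mono _ (prod_mono h subset_rfl) w hq

lemma fsucc_empty (w : List α) : fsucc δ F (∅ : Set K) w = ∅ := by
  simp [fsucc, reset, flagged, evalFrom_empty]

end Flags

section Levels

variable (δ : K → α → Set K) (F : Set K)

def attract (H : Set (Set K)) : Set (Set K) := {B | ∀ u, ∃ v, fsucc δ F B (u ++ v) ∈ H}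

/-- In the game where the opponent and the player alternately extend the word read from `B`,
`B ∈ level δ F k` says that the player can pass through `F` in `k` successive rounds while keeping
a run alive. -/
def level : ℕ → Set (Set K)
  | 0 => {B | B.Nonempty}
  | k + 1 => attract δ F (level k)

lemma attract_mono : Monotone (attract δ F) := fun _ _ h _ hB u =>
  let ⟨v, hv⟩ := hB u
  ⟨v, h hv⟩

lemma level_succ_subset : ∀ k, level δ F (k + 1) ⊆ level δ F k
  | 0 => fun B hB => by
    obtain ⟨v, hv⟩ := hB []
    by_contra hB
    rw [not_nonempty_iff_eq_empty.1 hB, fsucc_empty] at hv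
    exact not_nonempty_empty hv
  | k + 1 => attract_mono δ F (level_succ_subset k)

lemma level_antitone : Antitone (level δ F) :=
  antitone_nat_of_succ_le (level_succ_subset δ F)

variable {δ F} in
lemma mem_level_of_subset {k : ℕ} {B B' : Set K} (hB : B ∈ level δ F k) (h : B ⊆ B') :
    B' ∈ level δ F k := by
  induction k generalizing B B' with
  | zero => exact hB.mono h
  | succ k ih =>
    intro u
    obtain ⟨v, hv⟩ := hB u
    exact ⟨v, ih hv (fsucc_mono h _)⟩

noncomputable def rank (B : Set K) : ℕ := sInf {k | B ∉ level δ F (k + 1)}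

variable {δ F} in
lemma rank_le {B : Set K} {k : ℕ} (h : B ∉ level δ F (k + 1)) : rank δ F B ≤ k :=
  Nat.sInf_le h

variable [Finite K]

lemma exists_level_succ_eq : ∃ N, level δ F (N + 1) = level δ F N := by
  obtain ⟨a, b, hab, he⟩ := Finite.exists_ne_map_eq_of_infinite (level δ F)
  rcases Nat.lt_or_gt_of_ne hab with h | h
  · exact ⟨a, (level_succ_subset δ F a).antisymm (he ▸ level_antitone δ F h)⟩
  · exact ⟨b, (level_succ_subset δ F b).antisymm (he.symm ▸ level_antitone δ F h)⟩

noncomputable def winning : Set (Set K) := level δ F (exists_level_succ_eq δ F).choose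

lemma attract_winning : attract δ F (winning δ F) = winning δ F :=
  (exists_level_succ_eq δ F).choose_spec

variable {δ F}

lemma nonempty_of_mem_winning {B : Set K} (hB : B ∈ winning δ F) : B.Nonempty :=
  level_antitone δ F (Nat.zero_le _) hB

lemma exists_kill {B : Set K} (hB : B ∉ winning δ F) :
    ∃ u, ∀ v, fsucc δ F B (u ++ v) ∉ level δ F (rank δ F B) := by
  have hN : B ∉ level δ F ((exists_level_succ_eq δ F).choose + 1) := by
    rwa [(exists_level_succ_eq δ F).choose_spec]
  have : B ∉ level δ F (rank δ F B + 1) := Nat.sInf_mem (s := {k | B ∉ level δ F (k + 1)}) ⟨_, hN⟩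
  simpa [level, attract] using this

variable (δ F)

open scoped Classical in
noncomputable def killer (B : Set K) : List α :=
  if h : ∃ u, ∀ v, fsucc δ F B (u ++ v) ∉ level δ F (rank δ F B) then h.choose
  else []

variable {δ F}

lemma fsucc_killer_append {B : Set K} (hB : B ∉ winning δ F) (v : List α) :
    fsucc δ F B (killer δ F B ++ v) ∉ level δ F (rank δ F B) := by
  rw [killer, dif_pos (exists_kill hB)]
  exact (exists_kill hB).choose_spec v

variable (δ F)

def Winnable (D : Set (K × Bool)) : Prop :=
  ∀ u, ∃ v, flagged ((flagNFA δ F).evalFrom D (u ++ v)) ∈ winning δ F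

variable {δ F}

lemma winnable_reset {B : Set K} (hB : B ∈ winning δ F) : Winnable δ F (reset B) := by
  rw [← attract_winning] at hB
  exact hB

lemma Winnable.evalFrom {D : Set (K × Bool)} (hD : Winnable δ F D) (w : List α) :
    Winnable δ F ((flagNFA δ F).evalFrom D w) := fun u => by
  obtain ⟨v, hv⟩ := hD (w ++ u)
  exact ⟨v, by rwa [List.append_assoc, NFA.evalFrom_append] at hv⟩

variable (δ F)

open scoped Classical in
noncomputable def builder (D : Set (K × Bool)) : List α :=
  if h : ∃ v ≠ [], flagged ((flagNFA δ F).evalFrom D v) ∈ winning δ F then h.choose else []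

variable {δ F}

lemma builder_spec [Nonempty α] {D : Set (K × Bool)} (hD : Winnable δ F D) :
    builder δ F D ≠ [] ∧ flagged ((flagNFA δ F).evalFrom D (builder δ F D)) ∈ winning δ F := by
  have h : ∃ v ≠ [], flagged ((flagNFA δ F).evalFrom D v) ∈ winning δ F := by
    obtain ⟨v, hv⟩ := hD [Classical.arbitrary α]
    exact ⟨_, List.cons_ne_nil _ _, hv⟩
  rw [builder, dif_pos h]
  exact h.choose_spec

end Levels

section Threads

variable (δ : K → α → Set K) (F : Set K) (q₀ : K)

def thread (x : ℕ → α) (σ : ℕ) (p : K) (n : ℕ) : Set (K × Bool) :=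
  (flagNFA δ F).evalFrom (reset {p}) (seg x σ n)

def IsBirth (x : ℕ → α) (σ : ℕ) (p : K) : Prop :=
  (σ = 0 ∧ p = q₀) ∨ (p ∈ F ∧ p ∈ states (thread δ F x 0 q₀ σ))

def threads (x : ℕ → α) (n : ℕ) : Set (Set (K × Bool)) :=
  {S | ∃ σ ≤ n, ∃ p, IsBirth δ F q₀ x σ p ∧ S = thread δ F x σ p n}

def newThreads (T : Set (K × Bool)) (C : Set (Set (K × Bool))) : Set (Set (K × Bool)) :=
  C ∪ (fun q => reset {q}) '' (F ∩ states T)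

variable {δ F q₀}

lemma thread_self (x : ℕ → α) (σ : ℕ) (p : K) : thread δ F x σ p σ = reset {p} := by
  simp [thread]

lemma thread_eq_evalFrom (x : ℕ → α) (p : K) {σ n m : ℕ} (h₁ : σ ≤ n) (h₂ : n ≤ m) :
    thread δ F x σ p m = (flagNFA δ F).evalFrom (thread δ F x σ p n) (seg x n m) := by
  rw [thread, thread, ← NFA.evalFrom_append, seg_append x h₁ h₂]

lemma thread_succ (x : ℕ → α) (p : K) {σ n : ℕ} (h : σ ≤ n) :
    thread δ F x σ p (n + 1) = (flagNFA δ F).stepSet (thread δ F x σ p n) (x n) := by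
  rw [thread_eq_evalFrom x p h n.le_succ, seg_succ x le_rfl, seg_self]
  rfl

lemma mem_states_thread_iff {x : ℕ → α} {σ n : ℕ} (h : σ ≤ n) {p q : K} :
    q ∈ states (thread δ F x σ p n) ↔ ∃ r : ℕ → K, r σ = p ∧ r n = q ∧ IsSegRun δ x σ n r := by
  classical
  simp only [thread, states, mem_image, Prod.exists, exists_and_right, exists_eq_right]
  constructor
  · rintro ⟨b, hb⟩
    obtain ⟨r, h1, h2, h3, -⟩ := (mem_evalFrom_reset_seg h).1 hb
    exact ⟨r, h1, h2, h3⟩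
  · rintro ⟨r, h1, h2, h3⟩
    exact ⟨_, (mem_evalFrom_reset_seg h).2 ⟨r, h1, h2, h3, decide_eq_true_iff⟩⟩

lemma mem_states_thread_of_isSegRun {x : ℕ → α} {σ n : ℕ} {r : ℕ → K} (hr : IsSegRun δ x σ n r)
    (h : σ ≤ n) : r n ∈ states (thread δ F x σ (r σ) n) :=
  (mem_states_thread_iff h).2 ⟨r, rfl, rfl, hr⟩

lemma states_thread_subset {x : ℕ → α} {σ τ n : ℕ} {p q : K}
    (hp : p ∈ states (thread δ F x σ q τ)) (hστ : σ ≤ τ) (hτn : τ ≤ n) :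
    states (thread δ F x τ p n) ⊆ states (thread δ F x σ q n) := by
  intro q' hq'
  obtain ⟨π, hπτ, rfl, hπ⟩ := (mem_states_thread_iff hτn).1 hq'
  obtain ⟨ρ, hρσ, hρτ, hρ⟩ := (mem_states_thread_iff hστ).1 hp
  have hτ : ρ τ = π τ := hρτ.trans hπτ.symm
  exact (mem_states_thread_iff (hστ.trans hτn)).2
    ⟨_, by rw [glue_of_le ρ π hστ, hρσ], glue_of_ge hτ hτn, hρ.glue hπ hτ⟩

lemma states_thread_subset_of_isBirth {x : ℕ → α} {σ n : ℕ} {p : K}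
    (hb : IsBirth δ F q₀ x σ p) (hσn : σ ≤ n) :
    states (thread δ F x σ p n) ⊆ states (thread δ F x 0 q₀ n) := by
  rcases hb with ⟨rfl, rfl⟩ | ⟨-, hp⟩
  · exact subset_rfl
  · exact states_thread_subset hp σ.zero_le hσn

lemma states_thread_subset_fsucc {x : ℕ → α} {t τ n : ℕ} {r : ℕ → K} {B : Set K}
    (hr : IsSegRun δ x t τ r) (hrt : r t ∈ B) (hτF : r τ ∈ F) (htτ : t < τ) (hτn : τ ≤ n) :
    states (thread δ F x τ (r τ) n) ⊆ fsucc δ F B (seg x t n) := by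
  intro q hq
  obtain ⟨π, hπτ, rfl, hπ⟩ := (mem_states_thread_iff hτn).1 hq
  refine (mem_fsucc_seg (htτ.le.trans hτn)).2 ⟨_, by rwa [glue_of_le r π htτ.le],
    glue_of_ge hπτ.symm hτn, hr.glue hπ hπτ.symm, τ, ⟨htτ, hτn⟩, by rwa [glue_of_le r π le_rfl]⟩

lemma threads_zero (x : ℕ → α) :
    threads δ F q₀ x 0 = newThreads F (reset {q₀}) {reset {q₀}} := by
  ext S
  constructor
  · rintro ⟨σ, hσ, p, hbirth, rfl⟩
    obtain rfl : σ = 0 := by omega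
    rw [thread_self]
    rcases hbirth with ⟨-, rfl⟩ | ⟨hpF, hp⟩
    · exact Or.inl rfl
    · exact Or.inr ⟨p, ⟨hpF, by rwa [thread_self] at hp⟩, rfl⟩
  · rintro (rfl | ⟨p, ⟨hpF, hp⟩, rfl⟩)
    · exact ⟨0, le_rfl, q₀, Or.inl ⟨rfl, rfl⟩, (thread_self x 0 q₀).symm⟩
    · exact ⟨0, le_rfl, p, Or.inr ⟨hpF, by rwa [thread_self]⟩, (thread_self x 0 p).symm⟩

lemma threads_succ (x : ℕ → α) (n : ℕ) :
    threads δ F q₀ x (n + 1) = newThreads F (thread δ F x 0 q₀ (n + 1))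
      ((fun S => (flagNFA δ F).stepSet S (x n)) '' threads δ F q₀ x n) := by
  ext S
  constructor
  · rintro ⟨σ, hσ, p, hbirth, rfl⟩
    rcases Nat.lt_or_ge n σ with h | h
    · obtain rfl : σ = n + 1 := by omega
      rcases hbirth with ⟨h0, -⟩ | hp
      · omega
      · exact Or.inr ⟨p, hp, (thread_self x _ p).symm⟩
    · exact Or.inl ⟨_, ⟨σ, h, p, hbirth, rfl⟩, (thread_succ x p h).symm⟩
  · rintro (⟨_, ⟨σ, hσ, p, hbirth, rfl⟩, rfl⟩ | ⟨p, hp, rfl⟩)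
    · exact ⟨σ, by omega, p, hbirth, (thread_succ x p hσ).symm⟩
    · exact ⟨n + 1, le_rfl, p, Or.inr hp, (thread_self x _ p).symm⟩

end Threads

section Machine

variable (δ : K → α → Set K) (F : Set K) (q₀ : K) [Finite K]

/-- Before entering the main mode, the machine keeps the flagged set of reachable states
together with the threads; in the main mode it keeps a single flagged set. -/
abbrev MState (K : Type*) := (Set (K × Bool) × Set (Set (K × Bool))) ⊕ Set (K × Bool)

open scoped Classical in
noncomputable def enter (T : Set (K × Bool)) (C : Set (Set (K × Bool))) : MState K :=
  if h : ∃ S ∈ C, states S ∈ winning δ F then .inr (reset (states h.choose)) else .inl (T, C)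

open scoped Classical in
noncomputable def mstep : MState K → α → MState K
  | .inl (T, C), a =>
    enter δ F ((flagNFA δ F).stepSet T a)
      (newThreads F ((flagNFA δ F).stepSet T a) ((fun S => (flagNFA δ F).stepSet S a) '' C))
  | .inr D, a =>
    if flagged ((flagNFA δ F).stepSet D a) ∈ winning δ F then
      .inr (reset (flagged ((flagNFA δ F).stepSet D a)))
    else .inr ((flagNFA δ F).stepSet D a)

noncomputable def machine : DFA α (MState K) where
  step := mstep δ F
  start := enter δ F (reset {q₀}) (newThreads F (reset {q₀}) {reset {q₀}})
  accept := range Sum.inr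

noncomputable def mrun (x : ℕ → α) (n : ℕ) : MState K := (machine δ F q₀).eval (seg x 0 n)

def ResetAt (x : ℕ → α) (k : ℕ) : Prop :=
  ∃ D, mrun δ F q₀ x k = .inr D ∧ flagged ((flagNFA δ F).stepSet D (x k)) ∈ winning δ F

variable {δ F q₀}

lemma mrun_zero (x : ℕ → α) : mrun δ F q₀ x 0 = (machine δ F q₀).start := rfl

lemma mrun_succ (x : ℕ → α) (n : ℕ) :
    mrun δ F q₀ x (n + 1) = mstep δ F (mrun δ F q₀ x n) (x n) :=
  eval_seg_succ _ x n

lemma mrun_eq_evalFrom (x : ℕ → α) {n m : ℕ} (h : n ≤ m) :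
    mrun δ F q₀ x m = (machine δ F q₀).evalFrom (mrun δ F q₀ x n) (seg x n m) := by
  simp only [mrun, DFA.eval, ← DFA.evalFrom_of_append, seg_append x n.zero_le h]

lemma mrun_mem_range_inr {x : ℕ → α} {n m : ℕ} (h : n ≤ m)
    (hn : mrun δ F q₀ x n ∈ range Sum.inr) : mrun δ F q₀ x m ∈ range Sum.inr := by
  induction m, h using Nat.le_induction with
  | base => exact hn
  | succ m _ ih =>
    obtain ⟨D, hD⟩ := ih
    rw [mrun_succ, ← hD, mstep]
    split_ifs <;> exact mem_range_self _

lemma enter_cases (T : Set (K × Bool)) (C : Set (Set (K × Bool))) :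
    (enter δ F T C = .inl (T, C) ∧ ∀ S ∈ C, states S ∉ winning δ F) ∨
      ∃ S ∈ C, states S ∈ winning δ F ∧ enter δ F T C = .inr (reset (states S)) := by
  rw [enter]
  split_ifs with h
  · exact Or.inr ⟨h.choose, h.choose_spec.1, h.choose_spec.2, rfl⟩
  · simp only [not_exists, not_and] at h
    exact Or.inl ⟨rfl, h⟩

lemma mrun_cases (x : ℕ → α) (n : ℕ) :
    (mrun δ F q₀ x n = .inl (thread δ F x 0 q₀ n, threads δ F q₀ x n) ∧
        ∀ S ∈ threads δ F q₀ x n, states S ∉ winning δ F) ∨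
      ∃ m ≤ n, ∃ S ∈ threads δ F q₀ x m, states S ∈ winning δ F ∧
        mrun δ F q₀ x m = .inr (reset (states S)) := by
  induction n with
  | zero =>
    rw [mrun_zero, thread_self, threads_zero]
    refine (enter_cases _ _).imp id fun ⟨S, hS, hwin, h⟩ => ⟨0, le_rfl, S, ?_, hwin, h⟩
    rwa [threads_zero]
  | succ n ih =>
    rcases ih with ⟨hrun, -⟩ | ⟨m, hm, rest⟩
    · rw [mrun_succ, hrun, mstep, ← thread_succ x q₀ n.zero_le, ← threads_succ]
      exact (enter_cases _ _).imp id fun ⟨S, hS, hwin, h⟩ =>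
        ⟨n + 1, le_rfl, S, hS, hwin, by rw [mrun_succ, hrun, mstep, ← thread_succ x q₀ n.zero_le,
          ← threads_succ, h]⟩
    · exact Or.inr ⟨m, by omega, rest⟩

lemma winnable_of_mrun_eq_inr {x : ℕ → α} {n : ℕ} {D : Set (K × Bool)}
    (h : mrun δ F q₀ x n = .inr D) : Winnable δ F D := by
  have henter : ∀ {D} T C, enter δ F T C = .inr D → Winnable δ F D := fun T C h' => by
    rcases enter_cases (δ := δ) (F := F) T C with ⟨h'', -⟩ | ⟨S, -, hwin, h''⟩
    · rw [h''] at h'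
      cases h'
    · rw [h'', Sum.inr.injEq] at h'
      exact h' ▸ winnable_reset hwin
  induction n generalizing D with
  | zero => exact henter _ _ h
  | succ n ih =>
    rw [mrun_succ] at h
    rcases hM : mrun δ F q₀ x n with ⟨T, C⟩ | D'
    · rw [hM, mstep] at h
      exact henter _ _ h
    · rw [hM, mstep] at h
      split_ifs at h with hwin <;> rw [Sum.inr.injEq] at h <;> subst h
      · exact winnable_reset hwin
      · exact (ih hM).evalFrom [x n]

lemma mrun_eq_of_forall_not_resetAt {x : ℕ → α} {n m : ℕ} {D : Set (K × Bool)}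
    (hD : mrun δ F q₀ x n = .inr D) (h : n ≤ m) (hno : ∀ k, n ≤ k → k < m → ¬ ResetAt δ F q₀ x k) :
    mrun δ F q₀ x m = .inr ((flagNFA δ F).evalFrom D (seg x n m)) := by
  induction m, h using Nat.le_induction with
  | base => simpa using hD
  | succ m hm ih =>
    have hm' := ih fun k h1 h2 => hno k h1 (by omega)
    rw [mrun_succ, hm', mstep, if_neg fun h => hno m hm (by omega) ⟨_, hm', h⟩, seg_succ x hm,
      NFA.evalFrom_append, NFA.evalFrom_singleton]

end Machine

section Strategy

variable (δ : K → α → Set K) (F : Set K) (q₀ : K) [Finite K]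

noncomputable def killWord (C : Set (Set (K × Bool))) : List α :=
  (exists_diagonal_word (fun S w => killer δ F (states ((flagNFA δ F).evalFrom S w)))
    C.toFinite).choose

noncomputable def strategy : MState K → List α
  | .inl (_, C) => killWord δ F C
  | .inr D => builder δ F D

def FollowsAt (x : ℕ → α) (n : ℕ) : Prop := OccursAt x (strategy δ F (mrun δ F q₀ x n)) n

def IsGeneric (x : ℕ → α) : Prop := ∀ N, ∃ n ≥ N, FollowsAt δ F q₀ x n

variable {δ F}

lemma killWord_spec {C : Set (Set (K × Bool))} {S : Set (K × Bool)} (hS : S ∈ C) :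
    ∃ u v, killWord δ F C = u ++ killer δ F (states ((flagNFA δ F).evalFrom S u)) ++ v :=
  (exists_diagonal_word _ C.toFinite).choose_spec S hS

end Strategy

section Rejection

variable {δ : K → α → Set K} {F : Set K} {q₀ : K} [Finite K] {x : ℕ → α}

lemma mrun_eq_inl (hpre : ∀ n, mrun δ F q₀ x n ∉ range Sum.inr) (n : ℕ) :
    mrun δ F q₀ x n = .inl (thread δ F x 0 q₀ n, threads δ F q₀ x n) ∧
      ∀ S ∈ threads δ F q₀ x n, states S ∉ winning δ F :=
  (mrun_cases x n).resolve_right fun ⟨m, _, _, _, _, hm⟩ => hpre m ⟨_, hm.symm⟩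

lemma exists_kill_of_followsAt (hpre : ∀ n, mrun δ F q₀ x n ∉ range Sum.inr) {σ n : ℕ} {p : K}
    (hbirth : IsBirth δ F q₀ x σ p) (hσ : σ ≤ n) (hf : FollowsAt δ F q₀ x n) :
    ∃ t ≥ n, ∃ e ≥ t, states (thread δ F x σ p t) ∉ winning δ F ∧
      ∀ m ≥ e, fsucc δ F (states (thread δ F x σ p t)) (seg x t m) ∉
        level δ F (rank δ F (states (thread δ F x σ p t))) := by
  obtain ⟨u, v, huv⟩ := killWord_spec (δ := δ) (F := F)
    (show thread δ F x σ p n ∈ threads δ F q₀ x n from ⟨σ, hσ, p, hbirth, rfl⟩)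
  rw [FollowsAt, (mrun_eq_inl hpre n).1, strategy, huv, occursAt_append, occursAt_append] at hf
  obtain ⟨⟨hu, hkill⟩, -⟩ := hf
  have ht : (flagNFA δ F).evalFrom (thread δ F x σ p n) u = thread δ F x σ p (n + u.length) := by
    rw [thread_eq_evalFrom x p hσ (Nat.le_add_right n _), show seg x n (n + u.length) = u from hu]
  rw [ht] at hkill
  have hnot := (mrun_eq_inl hpre (n + u.length)).2 _ ⟨σ, by omega, p, hbirth, rfl⟩
  exact ⟨_, Nat.le_add_right n _, _, Nat.le_add_right _ _, hnot, fun m hm => by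
    rw [hkill.seg_eq hm]
    exact fsucc_killer_append hnot _⟩

theorem notMem_nbaLang_of_forall_notMem_range (hgen : IsGeneric δ F q₀ x)
    (hpre : ∀ n, mrun δ F q₀ x n ∉ range Sum.inr) : x ∉ nbaLang δ q₀ F := by
  rintro ⟨r, hr0, hr, hinf⟩
  have hrun : ∀ σ n, IsSegRun δ x σ n r := fun _ _ i _ _ => hr i
  have hreach : ∀ σ n, σ ≤ n → r n ∈ states (thread δ F x σ (r σ) n) := fun σ n h =>
    mem_states_thread_of_isSegRun (hrun σ n) h
  suffices ∀ γ t e B, t ≤ e → r t ∈ B → (∀ m ≥ e, fsucc δ F B (seg x t m) ∉ level δ F γ) →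
      False by
    obtain ⟨n, -, hn⟩ := hgen 0
    obtain ⟨t, -, e, hte, -, hkill⟩ :=
      exists_kill_of_followsAt hpre (Or.inl ⟨rfl, rfl⟩) n.zero_le hn
    exact this _ t e _ hte (hr0 ▸ hreach 0 t t.zero_le) hkill
  intro γ
  induction γ using Nat.strong_induction_on with
  | _ γ ih =>
  intro t e B hte hrt hkill
  obtain ⟨τ, hτF, heτ⟩ := hinf.exists_gt e
  obtain ⟨n, hτn, hn⟩ := hgen τ
  have hbirth : IsBirth δ F q₀ x τ (r τ) := Or.inr ⟨hτF, hr0 ▸ hreach 0 τ τ.zero_le⟩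
  obtain ⟨t', hnt', e', ht'e', -, hkill'⟩ := exists_kill_of_followsAt hpre hbirth hτn hn
  have hγ : states (thread δ F x τ (r τ) t') ∉ level δ F γ := fun h =>
    hkill t' (by omega) (mem_level_of_subset h
      (states_thread_subset_fsucc (hrun t τ) hrt hτF (by omega) (by omega)))
  have hrt' := hreach τ t' (by omega)
  obtain ⟨γ', rfl⟩ : ∃ γ', γ = γ' + 1 :=
    Nat.exists_eq_succ_of_ne_zero (by rintro rfl; exact hγ ⟨_, hrt'⟩)
  exact ih _ (Nat.lt_succ_of_le (rank_le hγ)) t' e' _ ht'e' hrt' hkill'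

end Rejection

section Acceptance

variable {δ : K → α → Set K} {F : Set K} {q₀ : K} {x : ℕ → α}

lemma exists_run_of_breakpoints {b : ℕ → ℕ} (hb : StrictMono b) {A : ℕ → Set K}
    (h0 : A 0 ⊆ states (thread δ F x 0 q₀ (b 0)))
    (hA : ∀ i, A (i + 1) ⊆ fsucc δ F (A i) (seg x (b i) (b (i + 1)))) :
    ∀ k, ∀ q ∈ A k, ∃ r : ℕ → K, r 0 = q₀ ∧ IsSegRun δ x 0 (b k) r ∧
      (∀ i < k, ∃ τ ∈ Ioc (b i) (b (i + 1)), r τ ∈ F) ∧ r (b k) = q := by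
  intro k
  induction k with
  | zero =>
    intro q hq
    obtain ⟨r, hr0, hrq, hr⟩ := (mem_states_thread_iff (Nat.zero_le _)).1 (h0 hq)
    exact ⟨r, hr0, hr, by simp, hrq⟩
  | succ k ih =>
    intro q hq
    obtain ⟨p, hpk, rfl, hp, τ, hτ, hpτ⟩ := (mem_fsucc_seg (hb k.lt_succ_self).le).1 (hA k hq)
    obtain ⟨r, hr0, hr, hvisit, hrk⟩ := ih _ hpk
    refine ⟨glue (b k) r p, by rwa [glue_of_le r p (Nat.zero_le _)], hr.glue hp hrk,
      fun i hi => ?_, glue_of_ge hrk (hb k.lt_succ_self).le⟩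
    rcases Nat.lt_succ_iff_lt_or_eq.1 hi with hi | rfl
    · obtain ⟨σ, hσ, hrσ⟩ := hvisit i hi
      exact ⟨σ, hσ, by rwa [glue_of_le r p (hσ.2.trans (hb.monotone hi))]⟩
    · exact ⟨τ, hτ, by rwa [glue_of_ge hrk hτ.1.le]⟩

lemma mem_nbaLang_of_breakpoints [Finite K] {b : ℕ → ℕ} (hb : StrictMono b) {A : ℕ → Set K}
    (h0 : A 0 ⊆ states (thread δ F x 0 q₀ (b 0)))
    (hA : ∀ i, A (i + 1) ⊆ fsucc δ F (A i) (seg x (b i) (b (i + 1))))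
    (hne : ∀ i, (A i).Nonempty) : x ∈ nbaLang δ q₀ F := by
  let _ : TopologicalSpace K := ⊥
  have _ : DiscreteTopology K := ⟨rfl⟩
  let Z : ℕ → Set (ℕ → K) := fun k => {r | r 0 = q₀} ∩
    (⋂ i ∈ Iio (b k), {r | r (i + 1) ∈ δ (r i) (x i)}) ∩
    ⋂ i ∈ Iio k, ⋃ τ ∈ Ioc (b i) (b (i + 1)), {r | r τ ∈ F}
  have hZ : ∀ k r, r ∈ Z k ↔ r 0 = q₀ ∧ IsSegRun δ x 0 (b k) r ∧
      ∀ i < k, ∃ τ ∈ Ioc (b i) (b (i + 1)), r τ ∈ F := by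
    simp [Z, IsSegRun, and_assoc]
  have hclosed : ∀ (i j : ℕ) (P : K → K → Prop), IsClosed {r : ℕ → K | P (r i) (r j)} :=
    fun i j P => (isClosed_discrete {p : K × K | P p.1 p.2}).preimage
      (f := fun r : ℕ → K => (r i, r j)) (by fun_prop)
  have hZclosed : ∀ k, IsClosed (Z k) := fun k =>
    ((hclosed 0 0 fun a _ => a = q₀).inter
      (isClosed_biInter fun i _ => hclosed i (i + 1) fun a c => c ∈ δ a (x i))).inter
      (isClosed_biInter fun i _ => (finite_Ioc _ _).isClosed_biUnion fun τ _ =>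
        hclosed τ τ fun a _ => a ∈ F)
  have hZne : ∀ k, (Z k).Nonempty := fun k => by
    obtain ⟨q, hq⟩ := hne k
    obtain ⟨r, hr0, hr, hvisit, -⟩ := exists_run_of_breakpoints hb h0 hA k q hq
    exact ⟨r, (hZ k r).2 ⟨hr0, hr, hvisit⟩⟩
  have hZanti : ∀ k, Z (k + 1) ⊆ Z k := fun k r hr => by
    obtain ⟨hr0, hr, hvisit⟩ := (hZ _ r).1 hr
    exact (hZ k r).2 ⟨hr0, fun i h1 h2 => hr i h1 (h2.trans (hb k.lt_succ_self)),
      fun i hi => hvisit i (hi.trans k.lt_succ_self)⟩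
  obtain ⟨r, hr⟩ := IsCompact.nonempty_iInter_of_sequence_nonempty_isCompact_isClosed Z hZanti
    hZne (hZclosed 0).isCompact hZclosed
  rw [mem_iInter] at hr
  refine ⟨r, ((hZ 0 r).1 (hr 0)).1,
    fun n => ((hZ _ r).1 (hr (n + 1))).2.1 n n.zero_le (n.lt_succ_self.trans_le hb.le_apply),
    infinite_of_forall_exists_gt fun a => ?_⟩
  obtain ⟨τ, hτ, hτF⟩ := ((hZ _ r).1 (hr (a + 1))).2.2 a a.lt_succ_self
  exact ⟨τ, hτF, hb.le_apply.trans_lt hτ.1⟩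

lemma mem_nbaLang_of_anchor [Finite K] (P : ℕ → Set K → Prop)
    (hnext : ∀ b A, P b A → ∃ b' > b, P b' (fsucc δ F A (seg x b b')) ∧
      (fsucc δ F A (seg x b b')).Nonempty)
    {b₀ : ℕ} {A₀ : Set K} (h₀ : P b₀ A₀) (hA₀ : A₀ ⊆ states (thread δ F x 0 q₀ b₀))
    (hne : A₀.Nonempty) : x ∈ nbaLang δ q₀ F := by
  choose! next hgt hP hne' using hnext
  let g : ℕ × Set K → ℕ × Set K := fun p => (next p.1 p.2, fsucc δ F p.2 (seg x p.1 (next p.1 p.2)))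
  have hseq : ∀ i, P (g^[i] (b₀, A₀)).1 (g^[i] (b₀, A₀)).2 := by
    intro i
    induction i with
    | zero => exact h₀
    | succ i ih => rw [iterate_succ_apply']; exact hP _ _ ih
  refine mem_nbaLang_of_breakpoints (b := fun i => (g^[i] (b₀, A₀)).1)
    (A := fun i => (g^[i] (b₀, A₀)).2) (strictMono_nat_of_lt_succ fun i => ?_) hA₀ (fun i => ?_)
    fun i => ?_
  · rw [iterate_succ_apply']
    exact hgt _ _ (hseq i)
  · rw [iterate_succ_apply']
  · cases i with
    | zero => exact hne
    | succ i => rw [iterate_succ_apply']; exact hne' _ _ (hseq i)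

variable (δ F q₀) in
def IsAnchor [Finite K] (x : ℕ → α) (b : ℕ) (A : Set K) : Prop :=
  ∃ n ≥ b, mrun δ F q₀ x n = .inr ((flagNFA δ F).evalFrom (reset A) (seg x b n))

variable [Finite K] [Nonempty α]

lemma exists_resetAt_of_followsAt {n : ℕ} {D : Set (K × Bool)} (hD : mrun δ F q₀ x n = .inr D)
    (hf : FollowsAt δ F q₀ x n) : ∃ k ≥ n, ResetAt δ F q₀ x k := by
  by_contra! hno
  obtain ⟨hne, hwin⟩ := builder_spec (winnable_of_mrun_eq_inr hD)
  rw [FollowsAt, hD, strategy] at hf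
  have hlen := List.length_pos_iff.2 hne
  have hm : n ≤ n + (builder δ F D).length - 1 := by omega
  refine hno _ hm ⟨_, mrun_eq_of_forall_not_resetAt hD hm fun k hk _ => hno k hk, ?_⟩
  rwa [← NFA.evalFrom_singleton, ← NFA.evalFrom_append, ← seg_succ x hm,
    Nat.sub_add_cancel (by omega), hf]

lemma IsAnchor.exists_next (hgen : IsGeneric δ F q₀ x) {b : ℕ} {A : Set K}
    (h : IsAnchor δ F q₀ x b A) :
    ∃ b' > b, IsAnchor δ F q₀ x b' (fsucc δ F A (seg x b b')) ∧
      (fsucc δ F A (seg x b b')).Nonempty := by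
  classical
  obtain ⟨n, hbn, hn⟩ := h
  obtain ⟨N, hnN, hN⟩ := hgen n
  obtain ⟨D, hD⟩ := mrun_mem_range_inr hnN ⟨_, hn.symm⟩
  have hex : ∃ k, n ≤ k ∧ ResetAt δ F q₀ x k := by
    obtain ⟨k, hk, hres⟩ := exists_resetAt_of_followsAt hD.symm hN
    exact ⟨k, by omega, hres⟩
  obtain ⟨hk, D', hD', hwin⟩ := Nat.find_spec hex
  have hrun := mrun_eq_of_forall_not_resetAt hn hk fun j hj hjk hres =>
    Nat.find_min hex hjk ⟨hj, hres⟩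
  rw [← NFA.evalFrom_append, seg_append x hbn hk, hD', Sum.inr.injEq] at hrun
  have hfs : flagged ((flagNFA δ F).stepSet D' (x (Nat.find hex))) =
      fsucc δ F A (seg x b (Nat.find hex + 1)) := by
    rw [fsucc, seg_succ x (hbn.trans hk), NFA.evalFrom_append, NFA.evalFrom_singleton, hrun]
  refine ⟨_, Nat.lt_succ_of_le (hbn.trans hk), ⟨_, le_rfl, ?_⟩,
    hfs ▸ nonempty_of_mem_winning hwin⟩
  rw [mrun_succ, hD', mstep, if_pos hwin, seg_self, NFA.evalFrom_nil, hfs]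

theorem mem_nbaLang_of_mem_range (hgen : IsGeneric δ F q₀ x) {n : ℕ}
    (h : mrun δ F q₀ x n ∈ range Sum.inr) : x ∈ nbaLang δ q₀ F := by
  obtain ⟨m, -, S, ⟨σ, hσ, p, hbirth, rfl⟩, hwin, hm⟩ :=
    (mrun_cases (δ := δ) (F := F) (q₀ := q₀) x n).resolve_left fun ⟨h', _⟩ => by
      rw [h'] at h
      simp at h
  exact mem_nbaLang_of_anchor (IsAnchor δ F q₀ x) (fun b A hA => hA.exists_next hgen)
    ⟨m, le_rfl, by rw [seg_self, NFA.evalFrom_nil, hm]⟩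
    (states_thread_subset_of_isBirth hbirth hσ) (nonempty_of_mem_winning hwin)

end Acceptance

section Occurrences

variable (w : List α)

/-- A shift register holding the last `w.length` letters read. -/
def windowDFA : DFA α (Fin w.length → Option α) where
  step s a i := if h : (i : ℕ) + 1 < w.length then s ⟨i + 1, h⟩ else some a
  start _ := none
  accept := {s | s ≠ fun i => some w[i]}

lemma windowDFA_eval (x : ℕ → α) (n : ℕ) :
    (windowDFA w).eval (seg x 0 n) =
      fun i : Fin w.length => if w.length ≤ n + i then some (x (n + i - w.length)) else none := by
  induction n with
  | zero =>
    funext i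
    simp [windowDFA, DFA.eval, Nat.not_le.2 i.2]
  | succ n ih =>
    rw [eval_seg_succ, ih]
    funext i
    simp only [windowDFA]
    split_ifs <;> first | rfl | omega | (congr 2; omega)

lemma windowDFA_eval_notMem_accept_iff {x : ℕ → α} {n : ℕ} :
    (windowDFA w).eval (seg x 0 n) ∉ (windowDFA w).accept ↔
      ∃ p, n = p + w.length ∧ OccursAt x w p := by
  rw [windowDFA_eval]
  simp only [windowDFA, mem_ofPred_eq, not_not]
  constructor
  · intro h
    have hle : w.length ≤ n := by
      rcases Nat.eq_zero_or_pos w.length with h0 | h0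
      · omega
      · have := congrFun h ⟨0, h0⟩
        by_contra hlt
        simp [hlt] at this
    refine ⟨n - w.length, by omega, List.ext_getElem (by simp) fun i h1 h2 => ?_⟩
    have := congrFun h ⟨i, h2⟩
    rw [if_pos (by simp; omega), Option.some_inj] at this
    rw [getElem_seg, show n - w.length + i = n + i - w.length by omega]
    simpa using this
  · rintro ⟨p, rfl, hp⟩
    funext i
    rw [if_pos (by omega), show p + w.length + i - w.length = p + i by omega]
    have := (List.ext_getElem_iff.1 hp).2 i (by simp) i.2
    rw [getElem_seg] at this
    simpa using this

def noOccurrenceFrom (m : ℕ) : Set (ℕ → α) :=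
  {x | ∀ n ≥ m, (windowDFA w).eval (seg x 0 n) ∈ (windowDFA w).accept}

lemma isBuchiRecognizable_iUnion_noOccurrenceFrom [Finite α] :
    IsBuchiRecognizable (⋃ m, noOccurrenceFrom w m) := by
  have := isBuchiRecognizable_nbaLang (coBuchiStep (windowDFA w)) ((windowDFA w).start, false)
    {p | p.2 = true}
  rw [nbaLang_coBuchiStep] at this
  convert this using 1
  ext x
  simp [noOccurrenceFrom]

variable [TopologicalSpace α] [DiscreteTopology α]

lemma isClosed_noOccurrenceFrom (m : ℕ) : IsClosed (noOccurrenceFrom w m) := by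
  simp only [noOccurrenceFrom, ofPred_forall]
  exact isClosed_iInter fun n => isClosed_iInter fun _ => (isClopen_setOf_eval_seg _ n _).isClosed

lemma interior_noOccurrenceFrom (m : ℕ) : interior (noOccurrenceFrom w m) = ∅ :=
  interior_eq_empty_of_forall_cylinder fun x n => by
    obtain ⟨y, hy, hocc⟩ := exists_occursAt_mem_cylinder x w (max n m)
    exact ⟨y, cylinder_anti x (le_max_left n m) hy, fun hC =>
      (windowDFA_eval_notMem_accept_iff w).2 ⟨_, rfl, hocc⟩ (hC _ (by omega))⟩

end Occurrences

section Decomposition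

variable (δ : K → α → Set K) (F : Set K) (q₀ : K) [Finite K]

/-- Wherever this word occurs, the strategy is followed somewhere inside it, whatever state the
machine is in when the word starts. -/
noncomputable def diagWord : List α :=
  (exists_diagonal_word (fun M w => strategy δ F ((machine δ F q₀).evalFrom M w))
    (Set.toFinite (univ : Set (MState K)))).choose

def openPart : Set (ℕ → α) := {x | ∃ n, mrun δ F q₀ x n ∈ range Sum.inr}

variable {δ F q₀}

lemma exists_followsAt_of_occursAt {x : ℕ → α} {p : ℕ} (h : OccursAt x (diagWord δ F q₀) p) :
    ∃ n ≥ p, FollowsAt δ F q₀ x n := by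
  obtain ⟨u, v, huv⟩ := (exists_diagonal_word _ (Set.toFinite univ)).choose_spec
    (mrun δ F q₀ x p) (mem_univ _)
  rw [diagWord, huv, occursAt_append, occursAt_append] at h
  obtain ⟨⟨hu, hfollow⟩, -⟩ := h
  refine ⟨p + u.length, Nat.le_add_right _ _, ?_⟩
  rwa [FollowsAt, mrun_eq_evalFrom x (Nat.le_add_right p u.length),
    show seg x p (p + u.length) = u from hu]

lemma isGeneric_of_notMem_iUnion {x : ℕ → α}
    (h : x ∉ ⋃ m, noOccurrenceFrom (diagWord δ F q₀) m) : IsGeneric δ F q₀ x := by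
  intro N
  simp only [mem_iUnion, noOccurrenceFrom, mem_ofPred_eq, not_exists, not_forall] at h
  obtain ⟨n, hn, hocc⟩ := h (N + (diagWord δ F q₀).length)
  obtain ⟨p, rfl, hp⟩ := (windowDFA_eval_notMem_accept_iff _).1 hocc
  obtain ⟨m, hm, hf⟩ := exists_followsAt_of_occursAt hp
  exact ⟨m, by omega, hf⟩

variable (δ F q₀)

lemma isBuchiRecognizable_openPart : IsBuchiRecognizable (openPart δ F q₀ : Set (ℕ → α)) := by
  have := isBuchiRecognizable_nbaLang (fun M a => {(machine δ F q₀).step M a})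
    (machine δ F q₀).start (machine δ F q₀).accept
  rw [nbaLang_dfa] at this
  convert this using 1
  ext x
  exact ⟨fun ⟨n, hn⟩ => (Ici_infinite n).mono fun m hm => mrun_mem_range_inr hm hn,
    fun h => h.nonempty⟩

lemma isOpen_openPart [TopologicalSpace α] [DiscreteTopology α] :
    IsOpen (openPart δ F q₀ : Set (ℕ → α)) := by
  simp only [openPart, ofPred_exists]
  exact isOpen_iUnion fun n => (isClopen_setOf_eval_seg _ n _).isOpen

lemma symmDiff_nbaLang_openPart_subset [Nonempty α] :
    symmDiff (nbaLang δ q₀ F) (openPart δ F q₀) ⊆ ⋃ m, noOccurrenceFrom (diagWord δ F q₀) m := by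
  intro x hx
  by_contra hC
  have hgen := isGeneric_of_notMem_iUnion hC
  rcases hx with ⟨hL, hO⟩ | ⟨⟨n, hn⟩, hL⟩
  · exact notMem_nbaLang_of_forall_notMem_range hgen (fun n hn => hO ⟨n, hn⟩) hL
  · exact hL (mem_nbaLang_of_mem_range hgen hn)

end Decomposition

end BuchiBaire

/-- automatic Baire property: If `L = L(𝒜) ⊆ α^ω` is accepted by a
nondeterministic Büchi automaton `𝒜` with finite state set, then there are
nondeterministic Büchi automata `ℬ` and `𝒞` with finite state sets such that `L(ℬ)` is
open, `L(𝒞)` is a countable union of closed sets with empty interior (hence a meager Fσ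
set), and `L(𝒜) Δ L(ℬ) ⊆ L(𝒞)`. -/
theorem automatic_baire_property
    {α : Type*} [Fintype α] [Nonempty α] [TopologicalSpace α] [DiscreteTopology α]
    {K : Type*} [Fintype K] (δ : K → α → Set K) (q₀ : K) (F : Set K)
    (L : Set (ℕ → α)) (hL : L = nbaLang δ q₀ F) :
    ∃ (K₁ : Type) (_ : Fintype K₁) (δ₁ : K₁ → α → Set K₁) (q₁ : K₁) (F₁ : Set K₁)
      (K₂ : Type) (_ : Fintype K₂) (δ₂ : K₂ → α → Set K₂) (q₂ : K₂) (F₂ : Set K₂),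
      IsOpen (nbaLang δ₁ q₁ F₁) ∧
      (∃ C : ℕ → Set (ℕ → α), (∀ n, IsClosed (C n) ∧ interior (C n) = ∅) ∧
        nbaLang δ₂ q₂ F₂ = ⋃ n, C n) ∧
      symmDiff L (nbaLang δ₁ q₁ F₁) ⊆ nbaLang δ₂ q₂ F₂ := by
  subst hL
  obtain ⟨K₁, hK₁, δ₁, q₁, F₁, hO⟩ := BuchiBaire.isBuchiRecognizable_openPart δ F q₀
  obtain ⟨K₂, hK₂, δ₂, q₂, F₂, hC⟩ :=
    BuchiBaire.isBuchiRecognizable_iUnion_noOccurrenceFrom (BuchiBaire.diagWord δ F q₀)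
  refine ⟨K₁, hK₁, δ₁, q₁, F₁, K₂, hK₂, δ₂, q₂, F₂, hO ▸ BuchiBaire.isOpen_openPart δ F q₀,
    ⟨BuchiBaire.noOccurrenceFrom (BuchiBaire.diagWord δ F q₀),
      fun m => ⟨BuchiBaire.isClosed_noOccurrenceFrom _ m,
      BuchiBaire.interior_noOccurrenceFrom _ m⟩, hC⟩, ?_⟩
  rw [hO, hC]
  exact BuchiBaire.symmDiff_nbaLang_openPart_subset δ F q₀
end
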